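/- arXiv:0801.3985 — 7 statements merged into one kernel-verified Lean document; each statement's English description precedes it below -/
import Mathlib

section
/- The Fibonacci sequence is cobweb-admissible: for all natural numbers n and k with k ≤ n, the product (∏_{i=1}^{k} fib(i)) · (∏_{i=1}^{n-k} fib(i)) divides ∏_{i=1}^{n} fib(i); equivalently, every Fibonomial coefficient binom(n,k)_F = F_n!/(F_k!·F_{n-k}!) is a natural number. -/
/-!
Write `F! n = F 1 * ⋯ * F n`. If every `F (a + b + 2)` is a linear combination of `F (a + 1)`
and `F (b + 1)`, then `F! (a + 1) * F! (b + 1)` divides both `F! (a + b + 1) * F (b + 1)` and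
`F! (a + b + 1) * F (a + 1)` by induction on `a + b`, hence divides `F! (a + b + 2)`. The Fibonacci
addition formula `fib (m + n + 1) = fib m * fib n + fib (m + 1) * fib (n + 1)` supplies such
combinations.
-/

def cobwebFactorial (F : ℕ → ℕ) (n : ℕ) : ℕ := ∏ i ∈ Finset.Icc 1 n, F i

namespace cobwebFactorial

variable (F : ℕ → ℕ)

@[simp]
lemma zero : cobwebFactorial F 0 = 1 := rfl

lemma succ (n : ℕ) : cobwebFactorial F (n + 1) = cobwebFactorial F n * F (n + 1) :=
  Finset.prod_Icc_succ_top (Nat.le_add_left 1 n) F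

variable {F}

theorem mul_dvd_add (hF : ∀ a b, ∃ x y, F (a + b + 2) = F (a + 1) * x + F (b + 1) * y) :
    ∀ a b, cobwebFactorial F a * cobwebFactorial F b ∣ cobwebFactorial F (a + b)
  | 0, b => by simp
  | a + 1, 0 => by simp
  | a + 1, b + 1 => by
    obtain ⟨x, y, hxy⟩ := hF a b
    have dvd_left : cobwebFactorial F (a + 1) * cobwebFactorial F (b + 1) ∣
        cobwebFactorial F (a + b + 1) * F (a + 1) := by
      have ih := mul_dvd_add hF a (b + 1)
      rw [succ F a, mul_right_comm]
      exact mul_dvd_mul_right ih _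
    have dvd_right : cobwebFactorial F (a + 1) * cobwebFactorial F (b + 1) ∣
        cobwebFactorial F (a + b + 1) * F (b + 1) := by
      have ih := mul_dvd_add hF (a + 1) b
      rw [succ F b, ← mul_assoc, Nat.add_right_comm]
      exact mul_dvd_mul_right ih _
    rw [show a + 1 + (b + 1) = a + b + 1 + 1 by omega, succ F (a + b + 1), hxy, mul_add,
      ← mul_assoc, ← mul_assoc]
    exact dvd_add (dvd_mul_of_dvd_left dvd_left x) (dvd_mul_of_dvd_left dvd_right y)
termination_by a b => a + b

end cobwebFactorial

lemma Nat.fib_add_two_eq_fib_succ_mul_add (a b : ℕ) :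
    Nat.fib (a + b + 2) = Nat.fib (a + 1) * Nat.fib (b + 2) + Nat.fib (b + 1) * Nat.fib a := by
  rw [show a + b + 2 = a + (b + 1) + 1 by omega, Nat.fib_add]
  ring

/-- The Fibonacci sequence is cobweb-admissible: for all `k ≤ n`,
`(∏_{i=1}^{k} fib i) * (∏_{i=1}^{n-k} fib i)` divides `∏_{i=1}^{n} fib i`. -/
theorem fib_cobweb_admissible :
    ∀ n k : ℕ, k ≤ n →
      (∏ i ∈ Finset.Icc 1 k, Nat.fib i) * (∏ i ∈ Finset.Icc 1 (n - k), Nat.fib i) ∣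
        ∏ i ∈ Finset.Icc 1 n, Nat.fib i := by
  intro n k hk
  obtain ⟨j, rfl⟩ := Nat.exists_eq_add_of_le hk
  rw [Nat.add_sub_cancel_left]
  exact cobwebFactorial.mul_dvd_add
    (fun a b => ⟨_, _, Nat.fib_add_two_eq_fib_succ_mul_add a b⟩) k j
end

section
/- For all natural numbers n and k with 1 ≤ k ≤ n−1, the Fibonomial coefficients satisfy the recurrence binom(n,k)_F = fib(k+1)·binom(n−1,k)_F + fib(n−k−1)·binom(n−1,k−1)_F, where binom(n,k)_F = (∏_{i=1}^{n} fib(i)) / ((∏_{i=1}^{k} fib(i))·(∏_{i=1}^{n-k} fib(i))) regarded as a rational number. -/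
/-- The Fibonacci `F`-factorial, as a rational number. -/
noncomputable def fibFact (n : ℕ) : ℚ := ∏ i ∈ Finset.Icc 1 n, (Nat.fib i : ℚ)

/-- The Fibonomial coefficient `binom(n,k)_F = F_n!/(F_k!·F_{n-k}!)` as a rational number. -/
noncomputable def fibBinom (n k : ℕ) : ℚ := fibFact n / (fibFact k * fibFact (n - k))

/-!
Writing `k = a + 1` and `n - k = b + 1`, clearing the denominators `F_{a+1}! F_{b+1}!` and dividing
by `F_{n-1}!` turns the recurrence into Fibonacci's addition formula
`fib (a + b + 2) = fib (a + 2) * fib (b + 1) + fib b * fib (a + 1)`.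
-/

lemma fibFact_succ (n : ℕ) : fibFact (n + 1) = fibFact n * Nat.fib (n + 1) :=
  Finset.prod_Icc_succ_top (Nat.le_add_left 1 n) _

lemma fibFact_pos (n : ℕ) : 0 < fibFact n :=
  Finset.prod_pos fun _ hi ↦ Nat.cast_pos.mpr <| Nat.fib_pos.mpr (Finset.mem_Icc.mp hi).1

lemma fibBinom_add (a b : ℕ) : fibBinom (a + b) a = fibFact (a + b) / (fibFact a * fibFact b) := by
  rw [fibBinom, Nat.add_sub_cancel_left]

lemma fibBinom_succ_add_succ (a b : ℕ) :
    fibBinom (a + 1 + (b + 1)) (a + 1)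
      = (Nat.fib (a + 2) : ℚ) * fibBinom (a + 1 + b) (a + 1)
        + (Nat.fib b : ℚ) * fibBinom (a + (b + 1)) a := by
  have hfib : (Nat.fib (a + 1 + b + 1) : ℚ)
      = Nat.fib (a + 1) * Nat.fib b + Nat.fib (a + 2) * Nat.fib (b + 1) := by
    exact_mod_cast Nat.fib_add (a + 1) b
  have hn : a + (b + 1) = a + 1 + b := by omega
  rw [fibBinom_add, fibBinom_add, fibBinom_add, ← add_assoc, hn, fibFact_succ (a + 1 + b), hfib,
    fibFact_succ a, fibFact_succ b]
  have := fibFact_pos a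
  have := fibFact_pos b
  have := Nat.cast_pos (α := ℚ) |>.mpr <| Nat.fib_pos.mpr (Nat.succ_pos a)
  have := Nat.cast_pos (α := ℚ) |>.mpr <| Nat.fib_pos.mpr (Nat.succ_pos b)
  field_simp
  ring

/-- For `1 ≤ k ≤ n - 1`, the Fibonomial coefficients satisfy the recurrence
`binom(n,k)_F = fib(k+1)·binom(n−1,k)_F + fib(n−k−1)·binom(n−1,k−1)_F`. -/
theorem fibBinom_recurrence (n k : ℕ) (hk : 1 ≤ k) (hkn : k ≤ n - 1) :
    fibBinom n k
      = (Nat.fib (k + 1) : ℚ) * fibBinom (n - 1) k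
        + (Nat.fib (n - k - 1) : ℚ) * fibBinom (n - 1) (k - 1) := by
  obtain ⟨a, rfl⟩ : ∃ a, k = a + 1 := ⟨k - 1, by omega⟩
  obtain ⟨b, rfl⟩ : ∃ b, n = a + 1 + (b + 1) := ⟨n - a - 2, by omega⟩
  convert fibBinom_succ_add_succ a b using 5 <;> omega
end

section
/- If A : ℕ → ℕ and B : ℕ → ℕ are cobweb-admissible sequences, then their at-the-point (pointwise) product C defined by C(n) = A(n)·B(n) is also cobweb-admissible, and moreover for all 0 ≤ k ≤ n the exact quotient binom(n,k)_C equals the product binom(n,k)_A · binom(n,k)_B. -/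
/-- The `F`-factorial of a sequence `F : ℕ → ℕ`: `F_n! = ∏_{i=1}^{n} F i`. -/
def ffact (F : ℕ → ℕ) (n : ℕ) : ℕ := ∏ i ∈ Finset.Icc 1 n, F i

/-- A sequence `F : ℕ → ℕ` is cobweb-admissible iff `F_k!·F_{n-k}! ∣ F_n!` for all `k ≤ n`. -/
def CobwebAdmissible (F : ℕ → ℕ) : Prop :=
  ∀ n k : ℕ, k ≤ n → ffact F k * ffact F (n - k) ∣ ffact F n

theorem ffact_mul (A B : ℕ → ℕ) (n : ℕ) :
    ffact (fun n => A n * B n) n = ffact A n * ffact B n :=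
  Finset.prod_mul_distrib

theorem ffact_mul_denom (A B : ℕ → ℕ) (n k : ℕ) :
    ffact (fun n => A n * B n) k * ffact (fun n => A n * B n) (n - k)
      = (ffact A k * ffact A (n - k)) * (ffact B k * ffact B (n - k)) := by
  rw [ffact_mul, ffact_mul, mul_mul_mul_comm]

theorem CobwebAdmissible.mul {A B : ℕ → ℕ} (hA : CobwebAdmissible A)
    (hB : CobwebAdmissible B) : CobwebAdmissible (fun n => A n * B n) := by
  intro n k hk
  rw [ffact_mul_denom, ffact_mul]
  exact mul_dvd_mul (hA n k hk) (hB n k hk)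

/-- The pointwise product of two cobweb-admissible sequences is cobweb-admissible, and the
`F`-nomial coefficients multiply: `binom(n,k)_{A·B} = binom(n,k)_A · binom(n,k)_B`. -/
theorem cobwebAdmissible_pointwise_mul (A B : ℕ → ℕ)
    (hA : CobwebAdmissible A) (hB : CobwebAdmissible B) :
    CobwebAdmissible (fun n => A n * B n) ∧
      ∀ n k : ℕ, k ≤ n →
        ffact (fun n => A n * B n) n /
            (ffact (fun n => A n * B n) k * ffact (fun n => A n * B n) (n - k))
          = (ffact A n / (ffact A k * ffact A (n - k)))
            * (ffact B n / (ffact B k * ffact B (n - k))) := by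
  refine ⟨hA.mul hB, fun n k hk => ?_⟩
  rw [ffact_mul_denom, ffact_mul]
  exact (Nat.div_mul_div_comm (hA n k hk) (hB n k hk)).symm
end

section
/- For all natural numbers c ≥ 1 and M ≥ 1, the periodic sequence B_{c,M} defined by f(0) = 1 and, for n ≥ 1, f(n) = c if M divides n and f(n) = 1 otherwise, is cobweb-admissible: for all 0 ≤ k ≤ n, (∏_{i=1}^{k} f(i))·(∏_{i=1}^{n-k} f(i)) divides ∏_{i=1}^{n} f(i). -/
/-! The `n`-th factorial of `B_{c,M}` is `c ^ ⌊n / M⌋`, so admissibility reduces to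
the superadditivity `⌊k / M⌋ + ⌊(n - k) / M⌋ ≤ ⌊n / M⌋` of the floor. -/

theorem Finset.prod_Icc_ite_dvd_eq_pow_div {α : Type*} [CommMonoid α] (c : α) (M n : ℕ) :
    (∏ i ∈ Finset.Icc 1 n, if M ∣ i then c else 1) = c ^ (n / M) := by
  rw [← Nat.Ioc_filter_dvd_card_eq_div, ← Finset.prod_const, Finset.prod_filter]
  -- `Finset.Icc 1 n` and `Finset.Ioc 0 n` are definitionally equal on `ℕ`.
  rfl

theorem periodic_seq_cobweb_admissible_general (c M : ℕ) :
    ∀ n k : ℕ, k ≤ n →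
      (∏ i ∈ Finset.Icc 1 k, if M ∣ i then c else 1)
          * (∏ i ∈ Finset.Icc 1 (n - k), if M ∣ i then c else 1) ∣
        ∏ i ∈ Finset.Icc 1 n, if M ∣ i then c else 1 := by
  intro n k hk
  simp only [Finset.prod_Icc_ite_dvd_eq_pow_div, ← pow_add]
  apply pow_dvd_pow
  calc k / M + (n - k) / M ≤ (k + (n - k)) / M := Nat.div_add_div_le_add_div
    _ = n / M := by rw [Nat.add_sub_cancel' hk]

/-- For `c ≥ 1` and `M ≥ 1`, the periodic sequence `B_{c,M}` (which is `c` at positive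
multiples of `M` and `1` elsewhere) is cobweb-admissible. -/
theorem periodic_seq_cobweb_admissible (c M : ℕ) (hc : 1 ≤ c) (hM : 1 ≤ M) :
    ∀ n k : ℕ, k ≤ n →
      (∏ i ∈ Finset.Icc 1 k, if M ∣ i then c else 1)
          * (∏ i ∈ Finset.Icc 1 (n - k), if M ∣ i then c else 1) ∣
        ∏ i ∈ Finset.Icc 1 n, if M ∣ i then c else 1 :=
  periodic_seq_cobweb_admissible_general c M
end

section
/- For all natural numbers c ≥ 1 and M ≥ 1, the not-diminishing sequence A_{c,M} defined by f(0) = 1, f(n) = 1 for 1 ≤ n < M, and f(n) = c for n ≥ M, is cobweb-admissible: for all 0 ≤ k ≤ n, (∏_{i=1}^{k} f(i))·(∏_{i=1}^{n-k} f(i)) divides ∏_{i=1}^{n} f(i). -/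
open Finset

theorem prod_Icc_one_ite_lt_eq_pow {α : Type*} [CommMonoid α] (c : α) (M n : ℕ) :
    (∏ i ∈ Icc 1 n, if i < M then 1 else c) = c ^ (n - (M - 1)) := by
  induction n with
  | zero => simp
  | succ n ih =>
    rw [prod_Icc_succ_top (by omega), ih]
    by_cases h : n + 1 < M
    · simp [h, Nat.sub_eq_zero_of_le (by omega : n ≤ M - 1),
        Nat.sub_eq_zero_of_le (by omega : n + 1 ≤ M - 1)]
    · rw [if_neg h, ← pow_succ]
      congr 1
      omega

theorem not_diminishing_seq_cobweb_admissible_general (c M : ℕ) :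
    ∀ n k : ℕ, k ≤ n →
      (∏ i ∈ Finset.Icc 1 k, if i < M then 1 else c)
          * (∏ i ∈ Finset.Icc 1 (n - k), if i < M then 1 else c) ∣
        ∏ i ∈ Finset.Icc 1 n, if i < M then 1 else c := by
  intro n k hk
  simp only [prod_Icc_one_ite_lt_eq_pow, ← pow_add]
  -- the exponent `n ↦ n - (M - 1)` is superadditive
  exact pow_dvd_pow c (by omega)

/-- For `c ≥ 1` and `M ≥ 1`, the not-diminishing sequence `A_{c,M}` (which is `1` for
`1 ≤ n < M` and `c` for `n ≥ M`) is cobweb-admissible. -/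
theorem not_diminishing_seq_cobweb_admissible (c M : ℕ) (hc : 1 ≤ c) (hM : 1 ≤ M) :
    ∀ n k : ℕ, k ≤ n →
      (∏ i ∈ Finset.Icc 1 k, if i < M then 1 else c)
          * (∏ i ∈ Finset.Icc 1 (n - k), if i < M then 1 else c) ∣
        ∏ i ∈ Finset.Icc 1 n, if i < M then 1 else c :=
  not_diminishing_seq_cobweb_admissible_general c M
end

section
/- Let b ≥ 1 be a natural number and let G : ℕ → ℕ satisfy G(0) = 0, G(1) = 1, and G(n+2) = b·G(n+1) + G(n) for all n. Then G is cobweb-admissible: for all 0 ≤ k ≤ n, (∏_{i=1}^{k} G(i))·(∏_{i=1}^{n-k} G(i)) divides ∏_{i=1}^{n} G(i). -/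
/-!
The addition formula `G (m + n + 1) = G (m + 1) * G (n + 1) + G m * G n` shows that each
`G (k + l)` with `k, l ≥ 1` is a linear combination of `G k` and `G l`. For any sequence `F` with
this property, `F_k! * F_l! ∣ F_{k+l}!` follows by induction on `k + l`: in
`F_{k+l}! = F_{k+l-1}! * F (k + l)`, the multiple of `F k` is absorbed by `F_{k-1}! * F_l! ∣ F_{k+l-1}!`
and the multiple of `F l` by `F_k! * F_{l-1}! ∣ F_{k+l-1}!`.
-/

section FFactorial

variable {α : Type*} [CommSemiring α] (F : ℕ → α)

def fFactorial (n : ℕ) : α := ∏ i ∈ Finset.Icc 1 n, F i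

@[simp]
theorem fFactorial_zero : fFactorial F 0 = 1 := by
  simp [fFactorial]

theorem fFactorial_succ (n : ℕ) : fFactorial F (n + 1) = fFactorial F n * F (n + 1) :=
  Finset.prod_Icc_succ_top (by omega) F

theorem fFactorial_mul_dvd_of_mem_span
    (hF : ∀ m n, F (m + n + 2) ∈ Ideal.span {F (m + 1), F (n + 1)}) (k l : ℕ) :
    fFactorial F k * fFactorial F l ∣ fFactorial F (k + l) := by
  induction h : k + l generalizing k l with
  | zero =>
    obtain ⟨rfl, rfl⟩ : k = 0 ∧ l = 0 := by omega
    simp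
  | succ s ih =>
    rcases k with _ | k
    · simp [← h]
    rcases l with _ | l
    · simp [← h]
    obtain ⟨x, y, hxy⟩ := Ideal.mem_span_pair.mp (hF k l)
    have hleft : fFactorial F k * fFactorial F (l + 1) ∣ fFactorial F s := ih k (l + 1) (by omega)
    have hright : fFactorial F (k + 1) * fFactorial F l ∣ fFactorial F s := ih (k + 1) l (by omega)
    rw [fFactorial_succ F s, show s + 1 = k + l + 2 by omega, ← hxy, mul_add]
    refine dvd_add ?_ ?_
    · rw [fFactorial_succ F k, mul_right_comm]
      exact mul_dvd_mul hleft (dvd_mul_left _ _)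
    · rw [fFactorial_succ F l, ← mul_assoc]
      exact mul_dvd_mul hright (dvd_mul_left _ _)

end FFactorial

section Recurrence

variable {α : Type*} [CommSemiring α] {b c : α} {G : ℕ → α}

theorem add_add_one_of_recurrence (h0 : G 0 = 0) (h1 : G 1 = 1)
    (hrec : ∀ n, G (n + 2) = b * G (n + 1) + c * G n) (m n : ℕ) :
    G (m + n + 1) = G (m + 1) * G (n + 1) + c * G m * G n := by
  induction n using Nat.twoStepInduction with
  | zero => simp [h0, h1]
  | one => rw [hrec m, hrec 0, h0, h1]; ring
  | more n ih ih' =>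
    rw [show m + (n + 2) + 1 = m + n + 1 + 2 by omega, hrec,
      show m + n + 1 + 1 = m + (n + 1) + 1 by omega, ih', ih, hrec (n + 1), hrec n]
    ring

theorem add_add_two_mem_span_of_recurrence (h0 : G 0 = 0) (h1 : G 1 = 1)
    (hrec : ∀ n, G (n + 2) = b * G (n + 1) + c * G n) (m n : ℕ) :
    G (m + n + 2) ∈ Ideal.span {G (m + 1), G (n + 1)} :=
  Ideal.mem_span_pair.mpr ⟨c * G n, G (m + 2), by
    rw [show m + n + 2 = m + 1 + n + 1 by omega, add_add_one_of_recurrence h0 h1 hrec (m + 1) n]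
    ring⟩

end Recurrence

theorem gen_fib_cobweb_admissible_general (b : ℕ) (G : ℕ → ℕ)
    (h0 : G 0 = 0) (h1 : G 1 = 1) (hrec : ∀ n, G (n + 2) = b * G (n + 1) + G n) :
    ∀ n k : ℕ, k ≤ n →
      (∏ i ∈ Finset.Icc 1 k, G i) * (∏ i ∈ Finset.Icc 1 (n - k), G i) ∣
        ∏ i ∈ Finset.Icc 1 n, G i := by
  intro n k hk
  obtain ⟨l, rfl⟩ := Nat.exists_eq_add_of_le hk
  rw [Nat.add_sub_cancel_left]
  have hrec' : ∀ n, G (n + 2) = b * G (n + 1) + 1 * G n := fun n => by rw [hrec, one_mul]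
  exact fFactorial_mul_dvd_of_mem_span G (add_add_two_mem_span_of_recurrence h0 h1 hrec') k l

/-- The sequence `G` with `G 0 = 0`, `G 1 = 1` and `G (n+2) = b·G (n+1) + G n` (`b ≥ 1`)
is cobweb-admissible. -/
theorem gen_fib_cobweb_admissible (b : ℕ) (hb : 1 ≤ b) (G : ℕ → ℕ)
    (h0 : G 0 = 0) (h1 : G 1 = 1) (hrec : ∀ n, G (n + 2) = b * G (n + 1) + G n) :
    ∀ n k : ℕ, k ≤ n →
      (∏ i ∈ Finset.Icc 1 k, G i) * (∏ i ∈ Finset.Icc 1 (n - k), G i) ∣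
        ∏ i ∈ Finset.Icc 1 n, G i :=
  gen_fib_cobweb_admissible_general b G h0 h1 hrec
end

section
/- The period-six sequence F defined by F(0) = 1 and, for n ≥ 1, F(n) = (2 if 2 divides n else 1)·(3 if 3 divides n else 1) — i.e. the sequence 1, 2, 3, 2, 1, 6, 1, 2, 3, 2, 1, 6, … — is cobweb-admissible: for all 0 ≤ k ≤ n, (∏_{i=1}^{k} F(i))·(∏_{i=1}^{n-k} F(i)) divides ∏_{i=1}^{n} F(i). -/
/-!
The sequence is the pointwise product of `i ↦ (2 if 2 ∣ i else 1)` and `i ↦ (3 if 3 ∣ i else 1)`.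
For `i ↦ (a if p ∣ i else 1)` the `F`-factorial of `n` is `a ^ (n / p)`, so admissibility reduces to
`k / p + (n - k) / p ≤ n / p`; and admissibility is preserved by pointwise products.
-/

namespace Cobweb

variable {M : Type*} [CommMonoid M]

def factorial (F : ℕ → M) (n : ℕ) : M :=
  ∏ i ∈ Finset.Icc 1 n, F i

def IsAdmissible (F : ℕ → M) : Prop :=
  ∀ n k : ℕ, k ≤ n → factorial F k * factorial F (n - k) ∣ factorial F n

theorem factorial_mul (F G : ℕ → M) (n : ℕ) :
    factorial (F * G) n = factorial F n * factorial G n :=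
  Finset.prod_mul_distrib

theorem IsAdmissible.mul {F G : ℕ → M} (hF : IsAdmissible F) (hG : IsAdmissible G) :
    IsAdmissible (F * G) := by
  intro n k hk
  rw [factorial_mul, factorial_mul, factorial_mul, mul_mul_mul_comm]
  exact mul_dvd_mul (hF n k hk) (hG n k hk)

theorem factorial_ite_dvd (p : ℕ) (a : M) (n : ℕ) :
    factorial (fun i ↦ if p ∣ i then a else 1) n = a ^ (n / p) := by
  rw [factorial, Finset.prod_ite, Finset.prod_const_one, mul_one, Finset.prod_const,
    ← Nat.Ioc_filter_dvd_card_eq_div n p, ← Finset.Icc_add_one_left_eq_Ioc, zero_add]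

theorem isAdmissible_ite_dvd (p : ℕ) (a : M) : IsAdmissible fun i ↦ if p ∣ i then a else 1 := by
  intro n k hk
  simp only [factorial_ite_dvd, ← pow_add]
  apply pow_dvd_pow
  simpa only [Nat.add_sub_cancel' hk] using
    Nat.div_add_div_le_add_div (x := k) (y := n - k) (z := p)

end Cobweb

/-- The period-six sequence `1, 2, 3, 2, 1, 6, 1, 2, 3, 2, 1, 6, …` given for `n ≥ 1` by
`F n = (2 if 2 ∣ n else 1)·(3 if 3 ∣ n else 1)` is cobweb-admissible. -/
theorem period_six_seq_cobweb_admissible :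
    ∀ n k : ℕ, k ≤ n →
      (∏ i ∈ Finset.Icc 1 k, (if 2 ∣ i then 2 else 1) * (if 3 ∣ i then 3 else 1))
          * (∏ i ∈ Finset.Icc 1 (n - k),
              (if 2 ∣ i then 2 else 1) * (if 3 ∣ i then 3 else 1)) ∣
        ∏ i ∈ Finset.Icc 1 n, (if 2 ∣ i then 2 else 1) * (if 3 ∣ i then 3 else 1) :=
  (Cobweb.isAdmissible_ite_dvd 2 2).mul (Cobweb.isAdmissible_ite_dvd 3 3)
end
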